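/- Let p_{3,k}, k = 0,…,3, be the classical Bernstein basis of ℙ₃[−1,2], i.e. p_{3,k}(x) = C(3,k)(x+1)^k(2−x)^{3−k}/27. Then the coordinates of x³ in this basis are γ_{3,0} = −1, γ_{3,1} = 2, γ_{3,2} = −4, γ_{3,3} = 8, and there exist no nodes t_{3,0},…,t_{3,3} ∈ [−1,2] and strictly positive weights α_{3,0},…,α_{3,3} such that the operator B₃f = Σ_{k=0}^3 f(t_{3,k}) α_{3,k} p_{3,k} fixes both the constant function 1 and the function x³ (the required node t_{3,2} = (−4)^{1/3} lies outside [−1,2]). -/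
import Mathlib


open Set

noncomputable section

/-- The classical Bernstein basis of `ℙ₃[-1,2]`. -/
def pB3' : Fin 4 → ℝ → ℝ :=
  fun k x => (Nat.choose 3 (k : ℕ)) * (x + 1) ^ (k : ℕ) * (2 - x) ^ (3 - (k : ℕ)) / 27

/-- The coordinates of `x³` in the classical Bernstein basis of `ℙ₃[-1,2]`. -/
def γB3' : Fin 4 → ℝ := ![-1, 2, -4, 8]

/-- On `ℙ₃[-1,2]`, `x³` has Bernstein coordinates `(-1, 2, -4, 8)`; no generalized Bernstein
operator built on the classical basis (nodes in `[-1,2]`, strictly positive weights) fixes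
both `1` and `x³`, the required node `t_{3,2} = (-4)^{1/3}` lying outside `[-1,2]`. -/
theorem no_bernstein_operator_fixing_cube_on_P3_neg_one_two :
    (∀ x : ℝ, x ^ 3 = ∑ k, γB3' k * pB3' k x) ∧
    (∀ t : ℝ, t ^ 3 = -4 → t ∉ Set.Icc (-1 : ℝ) 2) ∧
    ¬ ∃ t α : Fin 4 → ℝ, (∀ k, t k ∈ Set.Icc (-1 : ℝ) 2) ∧ (∀ k, 0 < α k) ∧
        (∀ x : ℝ, ∑ k, α k * pB3' k x = 1) ∧
        (∀ x : ℝ, ∑ k, (t k) ^ 3 * α k * pB3' k x = x ^ 3) := by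
  refine ⟨?_, ?_, ?_⟩
  · intro x
    simp only [Fin.sum_univ_four, γB3', pB3', show ((0:Fin 4):ℕ)=0 from rfl,
      show ((1:Fin 4):ℕ)=1 from rfl, show ((2:Fin 4):ℕ)=2 from rfl,
      show ((3:Fin 4):ℕ)=3 from rfl, Matrix.cons_val_zero, Matrix.cons_val_one,
      Matrix.head_cons, Matrix.cons_val_two, Matrix.tail_cons, Matrix.cons_val_three]
    norm_num
    ring
  · intro t ht ⟨h1, h2⟩
    nlinarith [sq_nonneg (t - 1), sq_nonneg (t + 1), sq_nonneg t]
  · rintro ⟨t, α, htmem, hαpos, h1, h2⟩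
    have e1 := h1 (-1)
    have e2 := h1 2
    have e3 := h1 0
    have e4 := h1 1
    have f3 := h2 0
    have f4 := h2 1
    simp only [Fin.sum_univ_four, pB3', show ((0:Fin 4):ℕ)=0 from rfl,
      show ((1:Fin 4):ℕ)=1 from rfl, show ((2:Fin 4):ℕ)=2 from rfl,
      show ((3:Fin 4):ℕ)=3 from rfl] at e1 e2 e3 e4 f3 f4
    norm_num at e1 e2 e3 e4 f3 f4
    have ht2 : -1 ≤ t 2 := (htmem 2).1
    have hα2 : 0 < α 2 := hαpos 2
    have ht0 : -1 ≤ t 0 := (htmem 0).1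
    have ht0' : t 0 ≤ 2 := (htmem 0).2
    have ht1 : -1 ≤ t 1 := (htmem 1).1
    have ht1' : t 1 ≤ 2 := (htmem 1).2
    have ht3' : t 3 ≤ 2 := (htmem 3).2
    have hα0 : 0 < α 0 := hαpos 0
    have hα1 : 0 < α 1 := hαpos 1
    have hα3 : 0 < α 3 := hαpos 3
    -- α 0 = 1, α 3 = 1
    have hA0 : α 0 = 1 := by linarith
    have hA3 : α 3 = 1 := by linarith
    have hA1 : α 1 = 1 := by linarith
    have hA2 : α 2 = 1 := by linarith
    -- c_k = t k ^ 3 * α k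
    have f1 := h2 (-1)
    have f2 := h2 2
    simp only [Fin.sum_univ_four, pB3', show ((0:Fin 4):ℕ)=0 from rfl,
      show ((1:Fin 4):ℕ)=1 from rfl, show ((2:Fin 4):ℕ)=2 from rfl,
      show ((3:Fin 4):ℕ)=3 from rfl] at f1 f2
    norm_num at f1 f2
    rw [hA0, hA1, hA2, hA3] at f3 f4
    rw [hA3] at f2
    rw [hA0] at f1
    norm_num at f1
    have hc2 : (t 2) ^ 3 = -4 := by linarith
    nlinarith [sq_nonneg (t 2 - 1), sq_nonneg (t 2 + 1), sq_nonneg (t 2)]
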